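/- Let R > 0 and let f(d,r) be the one-particle profile. Then: (i) for every d ≥ 0, the function r ↦ f(d,r) is concave on the interval [max{R, d−R}, d+R] (the intersection of its support with [R,∞)); and (ii) if d ≥ R, then r ↦ f(d,r) is concave on its full support [d−R, d+R]. (Concavity of the one-particle profile, Appendix B Proposition.) -/

import Mathlib

/-!
On the band `|d - R| ≤ r ≤ d + R` the profile is `2/(πR²) · r θ(r)` with
`θ(r) = arccos((d² + r² - R²)/(2dr))`; at `r = R - d` the first branch of the definition agrees
with this because `θ = π` there. Writing `A = r² + R² - d²` and `S = 4R²r² - A²`, two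
differentiations give `(r θ)'' = -(8R²r⁴ - A³) / (r S^{3/2})`. Inside the band `S > 0`, so
`A < 2Rr`: if `r ≥ R` then `A³ ≤ 8R³r³ ≤ 8R²r⁴`, and if `r < R ≤ d` then `A ≤ r²` and
`A³ ≤ r⁶ ≤ R²r⁴`.
-/

open MeasureTheory Real Set

noncomputable section

/-- The plane `ℝ²`. -/
abbrev Plane : Type := EuclideanSpace ℝ (Fin 2)

/-- The one-particle profile `f(d,r)`: `2r/R²` for `r ≤ R - d`; `0` for `r > R + d` or
`r < d - R`; and `(2r/(πR²)) arccos((d²+r²-R²)/(2dr))` otherwise. -/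
def profile (R d r : ℝ) : ℝ :=
  if r ≤ R - d then 2 * r / R ^ 2
  else if R + d < r ∨ r < d - R then 0
  else 2 * r / (π * R ^ 2) * Real.arccos ((d ^ 2 + r ^ 2 - R ^ 2) / (2 * d * r))

open Filter Topology

/-- Law of cosines: for `|y| = d`, the cosine of half the angle subtended at `0` by the arc of
`∂B_r(0)` inside `B_R(y)`. -/
def cosHalfAngle (R d r : ℝ) : ℝ := (d ^ 2 + r ^ 2 - R ^ 2) / (2 * d * r)

def halfArcLength (R d r : ℝ) : ℝ := r * arccos (cosHalfAngle R d r)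

/-- Heron: `16 · (area of the triangle with sides d, r, R)²`. -/
def heron (R d r : ℝ) : ℝ := 4 * R ^ 2 * r ^ 2 - (r ^ 2 + R ^ 2 - d ^ 2) ^ 2

def halfArcLengthDeriv (R d r : ℝ) : ℝ :=
  arccos (cosHalfAngle R d r) - (r ^ 2 + R ^ 2 - d ^ 2) / √(heron R d r)

lemma cube_le_of_sq_lt {A R r : ℝ} (hR : 0 ≤ R) (hr : 0 < r) (hA : A ^ 2 < 4 * R ^ 2 * r ^ 2)
    (h : R ≤ r ∨ A ≤ r ^ 2) : A ^ 3 ≤ 8 * R ^ 2 * r ^ 4 := by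
  rcases le_or_gt A 0 with hA₀ | hA₀
  · exact (Odd.pow_nonpos (by decide) hA₀).trans (by positivity)
  have hA₁ : A ≤ 2 * R * r :=
    (le_abs_self A).trans (abs_lt_of_sq_lt_sq (by linarith) (by positivity)).le
  by_cases hRr : R ≤ r
  · calc A ^ 3 ≤ (2 * R * r) ^ 3 := by gcongr
      _ = 8 * R ^ 2 * r ^ 3 * R := by ring
      _ ≤ 8 * R ^ 2 * r ^ 3 * r := by gcongr
      _ = 8 * R ^ 2 * r ^ 4 := by ring
  · calc A ^ 3 ≤ (r ^ 2) ^ 3 := by gcongr; exact h.resolve_left hRr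
      _ = r ^ 4 * r ^ 2 := by ring
      _ ≤ r ^ 4 * R ^ 2 := by gcongr; linarith
      _ ≤ 8 * R ^ 2 * r ^ 4 := by nlinarith [pow_pos hr 4]

section

variable {R d r a : ℝ}

lemma heron_pos (h₁ : |d - R| < r) (h₂ : r < d + R) : 0 < heron R d r := by
  obtain ⟨h₃, h₄⟩ := abs_lt.1 h₁
  have h₅ : 0 < d + r + R := by linarith [abs_nonneg (d - R)]
  have : heron R d r = (r + R - d) * (d + R - r) * ((d + r - R) * (d + r + R)) := by
    unfold heron
    ring
  rw [this]
  exact mul_pos (mul_pos (by linarith) (by linarith)) (mul_pos (by linarith) h₅)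

lemma one_sub_cosHalfAngle_sq (hd : d ≠ 0) (hr : r ≠ 0) :
    1 - cosHalfAngle R d r ^ 2 = heron R d r / (2 * d * r) ^ 2 := by
  unfold cosHalfAngle heron
  field_simp
  ring

lemma hasDerivAt_cosHalfAngle (hd : d ≠ 0) (hr : r ≠ 0) :
    HasDerivAt (cosHalfAngle R d) ((r ^ 2 + R ^ 2 - d ^ 2) / (2 * d * r ^ 2)) r := by
  have h := (((hasDerivAt_pow 2 r).const_add (d ^ 2)).sub_const (R ^ 2)).div
    ((hasDerivAt_id r).const_mul (2 * d)) (by simp [hd, hr])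
  refine h.congr_deriv ?_
  simp only [id]
  field_simp
  ring

lemma hasDerivAt_heron :
    HasDerivAt (heron R d) (4 * r * (d ^ 2 + R ^ 2 - r ^ 2)) r := by
  have h := ((hasDerivAt_pow 2 r).const_mul (4 * R ^ 2)).sub
    ((((hasDerivAt_pow 2 r).add_const (R ^ 2)).sub_const (d ^ 2)).pow 2)
  refine h.congr_deriv ?_
  ring

lemma hasDerivAt_arccos_cosHalfAngle (hd : 0 < d) (hr : 0 < r) (hS : 0 < heron R d r) :
    HasDerivAt (fun r => arccos (cosHalfAngle R d r))
      (-(r ^ 2 + R ^ 2 - d ^ 2) / (r * √(heron R d r))) r := by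
  have hu : 0 < 1 - cosHalfAngle R d r ^ 2 := by
    rw [one_sub_cosHalfAngle_sq hd.ne' hr.ne']
    positivity
  have h := (hasDerivAt_arccos (by nlinarith) (by nlinarith)).comp r
    (hasDerivAt_cosHalfAngle (R := R) hd.ne' hr.ne')
  refine h.congr_deriv ?_
  rw [one_sub_cosHalfAngle_sq hd.ne' hr.ne', sqrt_div' _ (by positivity : (0:ℝ) ≤ _),
    sqrt_sq (by positivity)]
  have := sqrt_pos.2 hS
  field_simp

lemma hasDerivAt_halfArcLength (hd : 0 < d) (hr : 0 < r) (hS : 0 < heron R d r) :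
    HasDerivAt (halfArcLength R d) (halfArcLengthDeriv R d r) r := by
  have h := (hasDerivAt_id r).mul (hasDerivAt_arccos_cosHalfAngle hd hr hS)
  refine h.congr_deriv ?_
  unfold halfArcLengthDeriv
  have := sqrt_pos.2 hS
  simp only [id]
  field_simp
  ring

lemma hasDerivAt_halfArcLengthDeriv (hd : 0 < d) (hr : 0 < r) (hS : 0 < heron R d r) :
    HasDerivAt (halfArcLengthDeriv R d)
      (-(8 * R ^ 2 * r ^ 4 - (r ^ 2 + R ^ 2 - d ^ 2) ^ 3) / (r * √(heron R d r) ^ 3)) r := by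
  have hsqrt := (hasDerivAt_sqrt hS.ne').comp r (hasDerivAt_heron (R := R) (d := d))
  have h := (hasDerivAt_arccos_cosHalfAngle hd hr hS).sub
    ((((hasDerivAt_pow 2 r).add_const (R ^ 2)).sub_const (d ^ 2)).div hsqrt (sqrt_pos.2 hS).ne')
  refine h.congr_deriv ?_
  have hs := sqrt_pos.2 hS
  have hss := sq_sqrt hS.le
  simp only [Function.comp_apply]
  generalize √(heron R d r) = s at hs hss ⊢
  unfold heron at hss
  field_simp
  linear_combination (-2 * (r ^ 2 + R ^ 2 - d ^ 2) - 4 * r ^ 2) * hss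

lemma continuous_halfArcLength (hd : d ≠ 0) : Continuous (halfArcLength R d) := by
  refine continuous_iff_continuousAt.2 fun x => ?_
  rcases eq_or_ne x 0 with rfl | hx
  · have hbdd : IsBoundedUnder (· ≤ ·) (𝓝 0) (norm ∘ fun r => arccos (cosHalfAngle R d r)) :=
      isBoundedUnder_of ⟨π, fun r => by
        simpa [abs_of_nonneg (arccos_nonneg _)] using arccos_le_pi _⟩
    change Tendsto (fun r => halfArcLength R d r) (𝓝 0) (𝓝 (halfArcLength R d 0))
    simpa [halfArcLength] using tendsto_id.zero_mul_isBoundedUnder_le hbdd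
  · exact continuousAt_id.mul <| continuous_arccos.continuousAt.comp <|
      ContinuousAt.div (by fun_prop) (by fun_prop) (by simp [hd, hx])

lemma concaveOn_halfArcLength (hR : 0 < R) (hd : 0 < d) (ha : |d - R| ≤ a)
    (hc : R ≤ a ∨ R ≤ d) :
    ConcaveOn ℝ (Icc a (d + R)) (halfArcLength R d) := by
  have band : ∀ r ∈ interior (Icc a (d + R)),
      0 < r ∧ 0 < heron R d r ∧ (R ≤ r ∨ R ≤ d) := by
    intro r hr
    obtain ⟨har, hrd⟩ : r ∈ Ioo a (d + R) := by rwa [interior_Icc] at hr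
    exact ⟨(abs_nonneg _).trans_lt (ha.trans_lt har), heron_pos (ha.trans_lt har) hrd,
      hc.imp_left fun h => h.trans har.le⟩
  refine concaveOn_of_hasDerivWithinAt2_nonpos (convex_Icc _ _)
    (continuous_halfArcLength hd.ne').continuousOn
    (fun r hr => (hasDerivAt_halfArcLength hd (band r hr).1 (band r hr).2.1).hasDerivWithinAt)
    (fun r hr =>
      (hasDerivAt_halfArcLengthDeriv hd (band r hr).1 (band r hr).2.1).hasDerivWithinAt)
    fun r hr => ?_
  obtain ⟨hr₀, hS, hrR⟩ := band r hr
  have hA : (r ^ 2 + R ^ 2 - d ^ 2) ^ 2 < 4 * R ^ 2 * r ^ 2 := by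
    unfold heron at hS
    linarith
  have := cube_le_of_sq_lt hR.le hr₀ hA (hrR.imp_right fun h => by nlinarith)
  exact div_nonpos_of_nonpos_of_nonneg (by linarith) (by positivity)

lemma profile_eq_halfArcLength (hd : 0 < d) (hr : r ∈ Icc |d - R| (d + R)) :
    profile R d r = 2 / (π * R ^ 2) * halfArcLength R d r := by
  obtain ⟨h₁, h₂⟩ := hr
  have h₃ := abs_sub_le_iff.1 h₁
  unfold profile halfArcLength
  split_ifs with hRd hout
  · obtain rfl : r = R - d := le_antisymm hRd h₃.2
    rcases eq_or_ne (R - d) 0 with h₀ | h₀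
    · simp [h₀]
    have : cosHalfAngle R d (R - d) = -1 := by
      unfold cosHalfAngle
      field_simp
      ring
    rw [this, arccos_neg_one]
    field_simp
  · exact absurd hout (by push Not; constructor <;> linarith)
  · unfold cosHalfAngle
    ring

lemma concaveOn_profile (hR : 0 < R) (hd : 0 < d) (ha : |d - R| ≤ a) (hc : R ≤ a ∨ R ≤ d) :
    ConcaveOn ℝ (Icc a (d + R)) (profile R d) :=
  ((concaveOn_halfArcLength hR hd ha hc).smul
    (by positivity : (0 : ℝ) ≤ 2 / (π * R ^ 2))).congr
    fun _ hr => (profile_eq_halfArcLength hd ⟨ha.trans hr.1, hr.2⟩).symm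

end

/-- **Concavity of the one-particle profile** (Appendix B Proposition).  For every
`d ≥ 0` the profile `r ↦ f(d,r)` is concave on `[max{R, d-R}, d+R]` (the intersection of
its support with `[R,∞)`), and if `d ≥ R` it is concave on its full support
`[d-R, d+R]`. -/
theorem profile_concavity (R : ℝ) (hR : 0 < R) :
    (∀ d : ℝ, 0 ≤ d →
      ConcaveOn ℝ (Set.Icc (max R (d - R)) (d + R)) (fun r => profile R d r))
    ∧ ∀ d : ℝ, R ≤ d →
      ConcaveOn ℝ (Set.Icc (d - R) (d + R)) (fun r => profile R d r) := by
  refine ⟨fun d hd => ?_, fun d hRd => ?_⟩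
  · rcases hd.eq_or_lt with rfl | hd
    · rw [max_eq_left (by linarith), zero_add, Icc_self]
      exact (concaveOn_const (profile R 0 R) (convex_singleton R)).congr fun _ hr => by rw [hr]
    · exact concaveOn_profile hR hd
        (abs_sub_le_iff.2 ⟨le_max_right _ _, by linarith [le_max_left R (d - R)]⟩)
        (Or.inl (le_max_left _ _))
  · exact concaveOn_profile hR (hR.trans_le hRd) (abs_of_nonneg (by linarith)).le (Or.inr hRd)
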